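/- Let θ_0 ⪯ θ_1 ⪯ ⋯ ⪯ θ_s be a tight incremental chain of mixed subdivisions of Δ = Σ_{i=1}^{s} Δ_i ⊂ ℝⁿ. Then for every k ∈ {0,…,s} and every n-cell D of S(θ_k) with components D_1,…,D_s, at least one of the following holds: (i) there exists i < k with dim(D_i) = 0, or (ii) for all i < k one has dim(Σ_{j ≠ i, j ≠ k, j ≤ s} D_j) < n (interpreting the sum over j ≠ i with j ranging over all indices different from i and k). -/
import Mathlib


open Pointwise

noncomputable section

/-- The standard pairing on `ℝⁿ`. -/
def dot {n : ℕ} (v x : Fin n → ℝ) : ℝ := ∑ i, v i * x i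

/-- The epigraph of a function `ψ` defined on `Λ`. -/
def epigraph {n : ℕ} (Λ : Set (Fin n → ℝ)) (ψ : (Fin n → ℝ) → ℝ) :
    Set ((Fin n → ℝ) × ℝ) :=
  {p | p.1 ∈ Λ ∧ ψ p.1 ≤ p.2}

/-- The support value `h_S(v,1) = inf {⟨v,x⟩ + z : (x,z) ∈ S}`. -/
def suppVal {n : ℕ} (S : Set ((Fin n → ℝ) × ℝ)) (v : Fin n → ℝ) : ℝ :=
  sInf ((fun p => dot v p.1 + p.2) '' S)

/-- The cell `C(ψ,v)`: the projection to `M_ℝ` of the face of the epigraph of `ψ`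
in the direction `(v,1)`. -/
def cell {n : ℕ} (Λ : Set (Fin n → ℝ)) (ψ : (Fin n → ℝ) → ℝ) (v : Fin n → ℝ) :
    Set (Fin n → ℝ) :=
  Prod.fst '' {p | p ∈ epigraph Λ ψ ∧ dot v p.1 + p.2 = suppVal (epigraph Λ ψ) v}

/-- A convex polyhedron: a finite intersection of closed halfspaces. -/
def IsPolyhedron {n : ℕ} (Λ : Set (Fin n → ℝ)) : Prop :=
  ∃ F : Finset ((Fin n → ℝ) × ℝ), Λ = {x | ∀ p ∈ F, dot p.1 x ≤ p.2}

/-- A convex piecewise affine function on `Λ`: the max of finitely many affine functions. -/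
def IsCPA {n : ℕ} (Λ : Set (Fin n → ℝ)) (ψ : (Fin n → ℝ) → ℝ) : Prop :=
  ∃ F : Finset ((Fin n → ℝ) × ℝ), ∃ hF : F.Nonempty,
    ∀ x ∈ Λ, ψ x = F.sup' hF fun p => dot p.1 x + p.2

/-- The inf-convolution `ψ_1 ⊞ ⋯ ⊞ ψ_s` of functions `ψ i` with domains `Λ i`. -/
def infConv {n s : ℕ} (Λ : Fin s → Set (Fin n → ℝ)) (ψ : Fin s → (Fin n → ℝ) → ℝ)
    (x : Fin n → ℝ) : ℝ :=
  sInf {t | ∃ y : Fin s → Fin n → ℝ,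
    (∀ i, y i ∈ Λ i) ∧ (∑ i, y i) = x ∧ (∑ i, ψ i (y i)) = t}

/-- The `i`-th component of a cell `C` of the mixed subdivision: the image under the `i`-th
projection of the set of decomposition tuples realizing the infimum of the inf-convolution. -/
def comp {n s : ℕ} (Λ : Fin s → Set (Fin n → ℝ)) (ψ : Fin s → (Fin n → ℝ) → ℝ)
    (C : Set (Fin n → ℝ)) (i : Fin s) : Set (Fin n → ℝ) :=
  (fun y => y i) '' {y : Fin s → Fin n → ℝ |
    (∀ j, y j ∈ Λ j) ∧ (∑ j, y j) ∈ C ∧ infConv Λ ψ (∑ j, y j) = ∑ j, ψ j (y j)}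

/-- The dimension of a subset of a real vector space: the dimension of its affine span. -/
def dimAff {V : Type*} [AddCommGroup V] [Module ℝ V] (S : Set V) : ℕ :=
  Module.finrank ℝ (affineSpan ℝ S).direction

section Helpers

variable {V : Type*} [AddCommGroup V] [Module ℝ V] [FiniteDimensional ℝ V]

omit [FiniteDimensional ℝ V] in
lemma dimAff_eq (S : Set V) : dimAff S = Module.finrank ℝ (vectorSpan ℝ S) := by
  rw [dimAff, direction_affineSpan]

omit [FiniteDimensional ℝ V] in
lemma vs_add_le (A B : Set V) : vectorSpan ℝ (A + B) ≤ vectorSpan ℝ A ⊔ vectorSpan ℝ B := by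
  rw [vectorSpan_def]
  apply Submodule.span_le.2
  rintro w ⟨x, hx, y, hy, rfl⟩
  rcases hx with ⟨a1, ha1, b1, hb1, rfl⟩
  rcases hy with ⟨a2, ha2, b2, hb2, rfl⟩
  have : (a1 + b1) -ᵥ (a2 + b2) = (a1 -ᵥ a2) + (b1 -ᵥ b2) := by
    simp [vsub_eq_sub]; abel
  show (a1 + b1) -ᵥ (a2 + b2) ∈ _
  rw [this]
  exact Submodule.add_mem_sup (vsub_mem_vectorSpan ℝ ha1 ha2) (vsub_mem_vectorSpan ℝ hb1 hb2)

lemma dimAff_add_le (A B : Set V) : dimAff (A + B) ≤ dimAff A + dimAff B := by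
  rw [dimAff_eq, dimAff_eq, dimAff_eq]
  exact le_trans (Submodule.finrank_mono (vs_add_le A B))
    (Submodule.finrank_add_le_finrank_add_finrank _ _)

omit [FiniteDimensional ℝ V] in
lemma dimAff_empty : dimAff (∅ : Set V) = 0 := by
  rw [dimAff_eq, vectorSpan_empty, finrank_bot]

omit [FiniteDimensional ℝ V] in
lemma dimAff_zero : dimAff (0 : Set V) = 0 := by
  have : (0 : Set V) = {0} := rfl
  rw [this, dimAff_eq, vectorSpan_singleton, finrank_bot]

lemma dimAff_sum_le {ι : Type*} (T : Finset ι) (f : ι → Set V) :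
    dimAff (∑ j ∈ T, f j) ≤ ∑ j ∈ T, dimAff (f j) := by
  classical
  induction T using Finset.cons_induction with
  | empty => simp [dimAff_zero]
  | cons a T ha ih =>
    rw [Finset.sum_cons, Finset.sum_cons]
    exact le_trans (dimAff_add_le _ _) (Nat.add_le_add le_rfl ih)

lemma dimAff_le_add_left {C : Set V} (hC : C.Nonempty) (B : Set V) :
    dimAff B ≤ dimAff (C + B) := by
  rw [dimAff_eq, dimAff_eq]
  apply Submodule.finrank_mono
  rw [vectorSpan_def, vectorSpan_def]
  apply Submodule.span_le.2
  rintro w ⟨b1, hb1, b2, hb2, rfl⟩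
  obtain ⟨c, hc⟩ := hC
  have : b1 -ᵥ b2 = (c + b1) -ᵥ (c + b2) := by simp [vsub_eq_sub]
  show b1 -ᵥ b2 ∈ _
  rw [this]
  apply Submodule.subset_span
  exact Set.vsub_mem_vsub (Set.add_mem_add hc hb1) (Set.add_mem_add hc hb2)

lemma dimAff_le_finrank (S : Set V) : dimAff S ≤ Module.finrank ℝ V :=
  Submodule.finrank_le _

end Helpers

/-- Let `θ_0 ⪯ θ_1 ⪯ ⋯ ⪯ θ_s` be a tight incremental chain of mixed subdivisions of
`Δ = Σ_i Λ_i ⊂ ℝⁿ`. Then for every `k ≤ s` and every `n`-cell `D` of `S(θ_k)` with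
components `D_i`, either some component `D_i` with `i < k` is a point, or for all
`i < k` one has `dim(Σ_{j ≠ i, j ≠ k} D_j) < n`. -/


theorem stmt18 {n s : ℕ} (Λ : Fin s → Set (Fin n → ℝ))
    (hΛ : ∀ i, ∃ F : Finset (Fin n → ℝ), Λ i = convexHull ℝ (↑F : Set (Fin n → ℝ)))
    (θ : ℕ → Fin s → (Fin n → ℝ) → ℝ)
    (hcpa : ∀ k, k ≤ s → ∀ i, IsCPA (Λ i) (θ k i))
    -- incremental: `θ_{k,i} = 0` for `i ≥ k`
    (hzero : ∀ k, k ≤ s → ∀ i : Fin s, k ≤ (i : ℕ) → ∀ x, θ k i x = 0)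
    -- the chain condition: `S(θ_{k+1})` refines `S(θ_k)`
    (hchain : ∀ k, k < s → ∀ v, ∃ w,
      cell (∑ i, Λ i) (infConv Λ (θ (k + 1))) v ⊆ cell (∑ i, Λ i) (infConv Λ (θ k)) w ∧
      ∀ i, comp Λ (θ (k + 1)) (cell (∑ i, Λ i) (infConv Λ (θ (k + 1))) v) i
          ⊆ comp Λ (θ k) (cell (∑ i, Λ i) (infConv Λ (θ k)) w) i)
    -- tightness of the chain: every `n`-cell `D` of `S(θ_k)` satisfies
    -- `Σ_{j<k} dim(D_j) + dim(Σ_{j≥k} D_j) = n`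
    (htight : ∀ k, k ≤ s → ∀ v,
      dimAff (cell (∑ i, Λ i) (infConv Λ (θ k)) v) = n →
      (∑ i ∈ Finset.univ.filter (fun i : Fin s => (i : ℕ) < k),
          dimAff (comp Λ (θ k) (cell (∑ i, Λ i) (infConv Λ (θ k)) v) i))
        + dimAff (∑ i ∈ Finset.univ.filter (fun i : Fin s => k ≤ (i : ℕ)),
            comp Λ (θ k) (cell (∑ i, Λ i) (infConv Λ (θ k)) v) i) = n) :
    ∀ k, k ≤ s → ∀ v,
      dimAff (cell (∑ i, Λ i) (infConv Λ (θ k)) v) = n →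
      (∃ i : Fin s, (i : ℕ) < k ∧
        dimAff (comp Λ (θ k) (cell (∑ i, Λ i) (infConv Λ (θ k)) v) i) = 0) ∨
      (∀ i : Fin s, (i : ℕ) < k →
        dimAff (∑ j ∈ Finset.univ.filter (fun j : Fin s => j ≠ i ∧ (j : ℕ) ≠ k),
          comp Λ (θ k) (cell (∑ i, Λ i) (infConv Λ (θ k)) v) j) < n) := by
  classical
  intro k hk v hdim
  rcases Nat.eq_zero_or_pos k with hk0 | hk1
  · right; intro i hi; subst hk0; exact absurd hi (Nat.not_lt_zero _)
  rcases Nat.eq_zero_or_pos n with hn0 | hn1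
  · left
    refine ⟨⟨0, by omega⟩, by simpa using hk1, ?_⟩
    have h := dimAff_le_finrank
      (comp Λ (θ k) (cell (∑ i, Λ i) (infConv Λ (θ k)) v) ⟨0, by omega⟩)
    rw [Module.finrank_fin_fun] at h
    omega
  by_cases hex : ∃ i : Fin s, (i : ℕ) < k ∧
      dimAff (comp Λ (θ k) (cell (∑ i, Λ i) (infConv Λ (θ k)) v) i) = 0
  · exact Or.inl hex
  right
  push_neg at hex
  intro i hi
  have hT := htight k hk v hdim
  set C := cell (∑ i, Λ i) (infConv Λ (θ k)) v with hCdef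
  set Y : Set (Fin s → Fin n → ℝ) := {y : Fin s → Fin n → ℝ |
    (∀ j, y j ∈ Λ j) ∧ (∑ j, y j) ∈ C ∧
      infConv Λ (θ k) (∑ j, y j) = ∑ j, θ k j (y j)} with hYdef
  have hcomp : ∀ j : Fin s, comp Λ (θ k) C j = (fun y => y j) '' Y := fun j => rfl
  have hYne : Y.Nonempty := by
    rcases Set.eq_empty_or_nonempty Y with h | h
    · exfalso
      apply hex i hi
      rw [hcomp i, h, Set.image_empty]
      exact dimAff_empty
    · exact h
  have hne : ∀ j : Fin s, (comp Λ (θ k) C j).Nonempty := by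
    intro j; rw [hcomp j]; exact hYne.image _
  -- finsets
  set Fa := Finset.univ.filter (fun j : Fin s => (j : ℕ) < k ∧ j ≠ i) with hFa
  set Fb := Finset.univ.filter (fun j : Fin s => k < (j : ℕ)) with hFb
  have hsplit : Finset.univ.filter (fun j : Fin s => j ≠ i ∧ (j : ℕ) ≠ k) = Fa ∪ Fb := by
    ext j
    simp only [hFa, hFb, Finset.mem_union, Finset.mem_filter, Finset.mem_univ, true_and,
      Ne, Fin.ext_iff]
    omega
  have hdisj : Disjoint Fa Fb := by
    rw [Finset.disjoint_left]
    intro j hja hjb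
    simp only [hFa, hFb, Finset.mem_filter, Finset.mem_univ, true_and] at hja hjb
    omega
  -- relate Fa-sum of dims to the < k sum
  have hiFk : i ∈ Finset.univ.filter (fun j : Fin s => (j : ℕ) < k) := by
    simp [hi]
  have hFaerase : Fa = (Finset.univ.filter (fun j : Fin s => (j : ℕ) < k)).erase i := by
    ext j
    simp only [hFa, Finset.mem_erase, Finset.mem_filter, Finset.mem_univ, true_and]
    tauto
  have h4 : (∑ j ∈ Fa, dimAff (comp Λ (θ k) C j)) + dimAff (comp Λ (θ k) C i)
      = ∑ j ∈ Finset.univ.filter (fun j : Fin s => (j : ℕ) < k),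
          dimAff (comp Λ (θ k) C j) := by
    rw [hFaerase]
    exact Finset.sum_erase_add _ _ hiFk
  -- Fb sum is dominated by the ≥ k sum
  have h3 : dimAff (∑ j ∈ Fb, comp Λ (θ k) C j)
      ≤ dimAff (∑ j ∈ Finset.univ.filter (fun j : Fin s => k ≤ (j : ℕ)),
          comp Λ (θ k) C j) := by
    rcases lt_or_eq_of_le hk with hks | hks
    · have hkk : (⟨k, hks⟩ : Fin s) ∉ Fb := by
        simp [hFb]
      have hFge : Finset.univ.filter (fun j : Fin s => k ≤ (j : ℕ))
          = insert (⟨k, hks⟩ : Fin s) Fb := by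
        ext j
        simp only [hFb, Finset.mem_insert, Finset.mem_filter, Finset.mem_univ, true_and,
          Fin.ext_iff]
        omega
      rw [hFge, Finset.sum_insert hkk]
      exact dimAff_le_add_left (hne _) _
    · have : Finset.univ.filter (fun j : Fin s => k ≤ (j : ℕ)) = Fb := by
        ext j
        have := j.isLt
        simp only [hFb, Finset.mem_filter, Finset.mem_univ, true_and]
        omega
      rw [this]
  -- main estimate
  have h1 : dimAff (∑ j ∈ Finset.univ.filter (fun j : Fin s => j ≠ i ∧ (j : ℕ) ≠ k),
        comp Λ (θ k) C j)
      ≤ (∑ j ∈ Fa, dimAff (comp Λ (θ k) C j))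
        + dimAff (∑ j ∈ Finset.univ.filter (fun j : Fin s => k ≤ (j : ℕ)),
            comp Λ (θ k) C j) := by
    rw [hsplit, Finset.sum_union hdisj]
    exact le_trans (dimAff_add_le _ _) (Nat.add_le_add (dimAff_sum_le _ _) h3)
  have h5 := hex i hi
  omega
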